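/- arXiv:0908.1748 — 4 statements merged into one kernel-verified Lean document; each statement's English description precedes it below -/
import Mathlib

section
/- Let A be a finite abelian group of order ℓ, let M = {(a_1, …, a_n) ∈ A^n : a_1 + ⋯ + a_n = 0}, and let σ ∈ S_n act on A^n (and hence on M) by permuting coordinates. Then the number of fixed points of σ in M equals d_A(σ) · ℓ^{m(σ) − 1}, where d(σ) is the gcd of the cycle lengths of σ, d_A(σ) is the cardinality of the kernel of the multiplication-by-d(σ) map A → A, and m(σ) is the number of cycles of σ. -/
/-- The multiset of cycle lengths of a permutation, counting fixed points as 1-cycles. -/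
def cycleLengths {n : ℕ} (σ : Equiv.Perm (Fin n)) : Multiset ℕ :=
  σ.cycleType + Multiset.replicate (n - σ.support.card) 1

/-- The number of cycles of a permutation, counting fixed points as 1-cycles. -/
def numCycles {n : ℕ} (σ : Equiv.Perm (Fin n)) : ℕ :=
  Multiset.card (cycleLengths σ)

/-- The gcd of the cycle lengths of a permutation. -/
def cycleGcd {n : ℕ} (σ : Equiv.Perm (Fin n)) : ℕ :=
  (cycleLengths σ).gcd

open Equiv Equiv.Perm Finset

section Aux

/-- The setoid of the "same cycle" relation. -/
def scSetoid {n : ℕ} (σ : Perm (Fin n)) : Setoid (Fin n) :=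
  ⟨σ.SameCycle, ⟨fun x => Equiv.Perm.SameCycle.refl σ x, fun h => h.symm, fun h h' => h.trans h'⟩⟩

instance {n : ℕ} (σ : Perm (Fin n)) : DecidableRel (scSetoid σ).r :=
  fun x y => inferInstanceAs (Decidable (σ.SameCycle x y))

abbrev CycQ {n : ℕ} (σ : Perm (Fin n)) : Type := Quotient (scSetoid σ)

instance {n : ℕ} (σ : Perm (Fin n)) : DecidableEq (CycQ σ) := fun a b =>
  Quotient.recOnSubsingleton₂ a b fun x y =>
    decidable_of_iff (σ.SameCycle x y) ⟨fun h => Quotient.sound h, fun h => Quotient.exact h⟩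

instance {n : ℕ} (σ : Perm (Fin n)) : Fintype (CycQ σ) :=
  @Quotient.fintype _ _ (scSetoid σ) (fun x y => inferInstanceAs (Decidable (σ.SameCycle x y)))

/-- size of a class -/
def orbSize {n : ℕ} (σ : Perm (Fin n)) (q : CycQ σ) : ℕ :=
  (Finset.univ.filter (fun i => Quotient.mk (scSetoid σ) i = q)).card

variable {n : ℕ} {σ : Perm (Fin n)}

lemma sc_of_eq {i j : Fin n} (h : Quotient.mk (scSetoid σ) i = Quotient.mk (scSetoid σ) j) :
    σ.SameCycle i j := Quotient.exact h

lemma eq_of_sc {i j : Fin n} (h : σ.SameCycle i j) :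
    Quotient.mk (scSetoid σ) i = Quotient.mk (scSetoid σ) j := Quotient.sound h

lemma out_sc (q : CycQ σ) : σ.SameCycle q.out q.out := SameCycle.refl σ _

lemma mk_out_eq (q : CycQ σ) : Quotient.mk (scSetoid σ) q.out = q := Quotient.out_eq q

lemma sc_out_iff {i : Fin n} {q : CycQ σ} :
    Quotient.mk (scSetoid σ) i = q ↔ σ.SameCycle q.out i := by
  constructor
  · intro h
    exact Quotient.exact ((mk_out_eq q).trans h.symm)
  · intro h
    exact ((mk_out_eq q).symm.trans (eq_of_sc h)).symm

end Aux

section Mult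

variable {n : ℕ} (σ : Perm (Fin n))

/-- A class is "in the support" iff its representative is. -/
def inSup (q : CycQ σ) : Prop := q.out ∈ σ.support

noncomputable instance : DecidablePred (inSup σ) := fun _ => Classical.dec _

lemma inSup_mk (i : Fin n) : inSup σ (Quotient.mk (scSetoid σ) i) ↔ i ∈ σ.support := by
  unfold inSup
  exact SameCycle.mem_support_iff (sc_of_eq (mk_out_eq _))

lemma orbSize_of_inSup {q : CycQ σ} (h : inSup σ q) :
    orbSize σ q = (σ.cycleOf q.out).support.card := by
  unfold orbSize
  have hset : Finset.univ.filter (fun i => Quotient.mk (scSetoid σ) i = q)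
      = (σ.cycleOf q.out).support := by
    ext i
    simp only [Finset.mem_filter, Finset.mem_univ, true_and, mem_support_cycleOf_iff]
    rw [sc_out_iff]
    exact ⟨fun h' => ⟨h', h⟩, fun h' => h'.1⟩
  rw [hset]

lemma fixed_zpow {x : Fin n} (hx : σ x = x) (k : ℤ) : (σ ^ k) x = x :=
  zpow_apply_eq_self_of_apply_eq_self hx k

lemma sc_of_not_mem_support {x i : Fin n} (hx : x ∉ σ.support) (h : σ.SameCycle x i) : i = x := by
  obtain ⟨k, hk⟩ := h
  rw [← hk, fixed_zpow σ (by simpa using hx) k]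

lemma orbSize_of_not_inSup {q : CycQ σ} (h : ¬ inSup σ q) : orbSize σ q = 1 := by
  unfold orbSize
  rw [Finset.card_eq_one]
  refine ⟨q.out, ?_⟩
  ext i
  simp only [Finset.mem_filter, Finset.mem_univ, true_and, Finset.mem_singleton, sc_out_iff]
  constructor
  · exact fun h' => sc_of_not_mem_support σ h h'
  · rintro rfl; exact SameCycle.refl σ _

lemma map_orbSize_inSup :
    ((Finset.univ.filter (inSup σ)).val.map (orbSize σ)) = σ.cycleType := by
  have hΦeq : ∀ q ∈ Finset.univ.filter (inSup σ), orbSize σ q = ((fun q : CycQ σ => σ.cycleOf q.out) q).support.card := by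
    intro q hq
    exact orbSize_of_inSup σ (Finset.mem_filter.mp hq).2
  rw [Multiset.map_congr rfl hΦeq]
  have : ((Finset.univ.filter (inSup σ)).val.map fun q => ((fun q : CycQ σ => σ.cycleOf q.out) q).support.card)
      = ((Finset.univ.filter (inSup σ)).val.map (fun q : CycQ σ => σ.cycleOf q.out)).map (Finset.card ∘ Equiv.Perm.support) := by
    rw [Multiset.map_map]; rfl
  rw [this, cycleType_def]
  congr 1
  have hinj : Set.InjOn (fun q : CycQ σ => σ.cycleOf q.out) (Finset.univ.filter (inSup σ)) := by
    intro q hq r hr h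
    simp only [Finset.coe_filter, Set.mem_setOf_eq] at hq hr
    have hmem : q.out ∈ (σ.cycleOf q.out).support :=
      mem_support_cycleOf_iff.mpr ⟨SameCycle.refl σ _, hq.2⟩
    rw [show σ.cycleOf q.out = σ.cycleOf r.out from h] at hmem
    have := (mem_support_cycleOf_iff.mp hmem).1
    rw [← mk_out_eq q, ← mk_out_eq r]
    exact (eq_of_sc this).symm
  rw [← Finset.image_val_of_injOn hinj]
  congr 1
  ext c
  simp only [Finset.mem_image, Finset.mem_filter, Finset.mem_univ, true_and]
  constructor
  · rintro ⟨q, hq, rfl⟩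
    exact cycleOf_mem_cycleFactorsFinset_iff.mpr hq
  · intro hc
    obtain ⟨x, hx⟩ := (mem_cycleFactorsFinset_iff.mp hc).1.nonempty_support
    have hxs : x ∈ σ.support := mem_cycleFactorsFinset_support_le hc hx
    refine ⟨Quotient.mk (scSetoid σ) x, (inSup_mk σ x).mpr hxs, ?_⟩
    have h1 : σ.cycleOf (Quotient.mk (scSetoid σ) x).out = σ.cycleOf x :=
      SameCycle.cycleOf_eq (sc_of_eq (mk_out_eq _))
    rw [h1]
    exact ((eq_cycleOf_of_mem_cycleFactorsFinset_iff σ c hc x).mpr hx).symm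

lemma card_not_inSup :
    (Finset.univ.filter (fun q => ¬ inSup σ q)).card = n - σ.support.card := by
  have : (Finset.univ.filter (fun q => ¬ inSup σ q)).card = Fintype.card {q : CycQ σ // ¬ inSup σ q} :=
    (Fintype.card_subtype _).symm
  rw [this]
  have e : {i : Fin n // i ∉ σ.support} ≃ {q : CycQ σ // ¬ inSup σ q} := by
    refine Equiv.ofBijective
      (fun i => ⟨Quotient.mk (scSetoid σ) i.1, by simp [inSup_mk, i.2]⟩) ⟨?_, ?_⟩
    · rintro ⟨i, hi⟩ ⟨j, hj⟩ h
      simp only [Subtype.mk.injEq] at h ⊢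
      exact (sc_of_not_mem_support σ hi (sc_of_eq h)).symm
    · rintro ⟨q, hq⟩
      refine ⟨⟨q.out, by simpa [inSup] using hq⟩, ?_⟩
      simp [mk_out_eq]
  rw [← Fintype.card_congr e, Fintype.card_subtype_compl, Fintype.card_coe, Fintype.card_fin]

lemma map_orbSize_eq : ((Finset.univ : Finset (CycQ σ)).val.map (orbSize σ)) = cycleLengths σ := by
  classical
  have hsplit : (Finset.univ : Finset (CycQ σ)).val
      = (Finset.univ.filter (inSup σ)).val + (Finset.univ.filter (fun q => ¬ inSup σ q)).val := by
    simp only [Finset.filter_val]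
    exact (Multiset.filter_add_not _ _).symm
  rw [hsplit, Multiset.map_add, map_orbSize_inSup]
  unfold cycleLengths
  congr 1
  have : ∀ q ∈ (Finset.univ.filter (fun q => ¬ inSup σ q)).val, orbSize σ q = 1 := by
    intro q hq
    exact orbSize_of_not_inSup σ (Finset.mem_filter.mp (Finset.mem_val.mp hq)).2
  rw [Multiset.map_congr rfl this, Multiset.map_const', ← Finset.card_def, card_not_inSup]

lemma numCycles_eq : numCycles σ = Fintype.card (CycQ σ) := by
  unfold numCycles
  rw [← map_orbSize_eq σ, Multiset.card_map]
  rfl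

lemma cycleGcd_eq : cycleGcd σ = Finset.univ.gcd (orbSize σ) := by
  unfold cycleGcd
  rw [← map_orbSize_eq σ, Finset.gcd_def]

end Mult

section Alg

lemma gcd_smul_mem {A : Type*} [AddCommGroup A] (S : AddSubgroup A) {Q : Type*} [DecidableEq Q]
    (l : Q → ℕ) (s : Finset Q) (h : ∀ q ∈ s, ∀ x : A, l q • x ∈ S) :
    ∀ x : A, (s.gcd l) • x ∈ S := by
  induction s using Finset.induction with
  | empty => intro x; simp only [Finset.gcd_empty, zero_smul]; exact S.zero_mem
  | @insert a s ha ih =>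
    intro x
    have hgcd : (insert a s).gcd l = Nat.gcd (l a) (s.gcd l) := Finset.gcd_insert
    rw [hgcd]
    have hm : ∀ x : A, l a • x ∈ S := h a (Finset.mem_insert_self a s)
    have hk : ∀ x : A, (s.gcd l) • x ∈ S := ih (fun q hq => h q (Finset.mem_insert_of_mem hq))
    set m := l a
    set k := s.gcd l
    have hb : (Nat.gcd m k : ℤ) = m * Nat.gcdA m k + k * Nat.gcdB m k := Nat.gcd_eq_gcd_ab m k
    have : (Nat.gcd m k) • x = m • (Nat.gcdA m k • x) + k • (Nat.gcdB m k • x) := by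
      rw [← natCast_zsmul, hb, add_smul, mul_smul, mul_smul, natCast_zsmul, natCast_zsmul]
    rw [this]
    exact S.add_mem (hm _) (hk _)

lemma alg_count {Q : Type*} [Fintype Q] [DecidableEq Q] [Nonempty Q]
    (A : Type*) [AddCommGroup A] [Fintype A] (l : Q → ℕ) :
    Nat.card {a : Q → A // ∑ q, l q • a q = 0} =
      Nat.card {x : A // (Finset.univ.gcd l) • x = 0} * (Fintype.card A) ^ (Fintype.card Q - 1) := by
  classical
  set d := Finset.univ.gcd l with hd
  let φ : (Q → A) →+ A := AddMonoidHom.mk' (fun a => ∑ q, l q • a q)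
    (by intro a b; simp [smul_add, Finset.sum_add_distrib])
  let ψ : A →+ A := AddMonoidHom.mk' (fun x => d • x) (by intro a b; simp [smul_add])
  have hsingle : ∀ (q : Q) (x : A), φ (Pi.single q x) = l q • x := by
    intro q x
    show ∑ p, l p • Pi.single q x p = l q • x
    rw [Finset.sum_eq_single q]
    · simp
    · intro p _ hp
      simp [Pi.single_eq_of_ne hp]
    · simp
  have hrange : φ.range = ψ.range := by
    apply le_antisymm
    · rintro y ⟨a, rfl⟩
      refine ⟨∑ q, (l q / d) • a q, ?_⟩
      show d • (∑ q, (l q / d) • a q) = ∑ q, l q • a q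
      rw [Finset.smul_sum]
      refine Finset.sum_congr rfl fun q _ => ?_
      rw [← mul_smul, Nat.mul_div_cancel' (Finset.gcd_dvd (Finset.mem_univ q))]
    · rintro y ⟨x, rfl⟩
      show d • x ∈ φ.range
      refine gcd_smul_mem φ.range l Finset.univ (fun q _ x => ⟨Pi.single q x, hsingle q x⟩) x
  have hker1 : Nat.card {a : Q → A // ∑ q, l q • a q = 0} = Nat.card φ.ker := by
    apply Nat.card_congr
    exact Equiv.subtypeEquivRight (fun a => by simp [AddMonoidHom.mem_ker, φ])
  have hker2 : Nat.card {x : A // d • x = 0} = Nat.card ψ.ker := by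
    apply Nat.card_congr
    exact Equiv.subtypeEquivRight (fun x => by simp [AddMonoidHom.mem_ker, ψ])
  have hc1 : Nat.card (Q → A) = Nat.card (φ.range) * Nat.card (φ.ker) := by
    rw [AddSubgroup.card_eq_card_quotient_mul_card_addSubgroup φ.ker]
    congr 1
    exact Nat.card_congr (QuotientAddGroup.quotientKerEquivRange φ).toEquiv
  have hc2 : Nat.card A = Nat.card (ψ.range) * Nat.card (ψ.ker) := by
    rw [AddSubgroup.card_eq_card_quotient_mul_card_addSubgroup ψ.ker]
    congr 1
    exact Nat.card_congr (QuotientAddGroup.quotientKerEquivRange ψ).toEquiv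
  have hR : 0 < Nat.card (ψ.range) := Nat.card_pos
  rw [hker1, hker2]
  have hm : 1 ≤ Fintype.card Q := Fintype.card_pos
  have hfun : Nat.card (Q → A) = (Fintype.card A) ^ (Fintype.card Q) := by
    rw [Nat.card_eq_fintype_card, Fintype.card_fun]
  have hA' : Nat.card A = Fintype.card A := Nat.card_eq_fintype_card
  -- key equation
  have key : Nat.card (ψ.range) * Nat.card (φ.ker)
      = Nat.card (ψ.range) * (Nat.card (ψ.ker) * (Fintype.card A) ^ (Fintype.card Q - 1)) := by
    calc Nat.card (ψ.range) * Nat.card (φ.ker)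
        = Nat.card (φ.range) * Nat.card (φ.ker) := by rw [hrange]
      _ = Nat.card (Q → A) := hc1.symm
      _ = (Fintype.card A) ^ (Fintype.card Q) := hfun
      _ = (Fintype.card A) ^ (Fintype.card Q - 1) * (Fintype.card A) := by
          rw [← pow_succ, Nat.sub_add_cancel hm]
      _ = (Fintype.card A) ^ (Fintype.card Q - 1) * (Nat.card (ψ.range) * Nat.card (ψ.ker)) := by
          rw [← hA', hc2]
      _ = _ := by ring
  exact Nat.eq_of_mul_eq_mul_left hR key

end Alg

section Equiv

variable {n : ℕ} (σ : Perm (Fin n)) {A : Type*} [AddCommGroup A] [Fintype A]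

lemma fixed_const {v : Fin n → A} (hv : ∀ i, v (σ i) = v i) {i j : Fin n}
    (h : σ.SameCycle i j) : v i = v j := by
  obtain ⟨k, hk⟩ := h
  rw [← hk]
  clear hk
  induction k using Int.induction_on with
  | zero => simp
  | succ k ih =>
    have : (σ ^ ((k : ℤ) + 1)) i = σ ((σ ^ (k : ℤ)) i) := by
      rw [add_comm, zpow_add, zpow_one, Equiv.Perm.mul_apply]
    rw [this, hv]
    exact ih
  | pred k ih =>
    have : (σ ^ (-(k : ℤ) - 1)) i = σ⁻¹ ((σ ^ (-(k : ℤ))) i) := by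
      rw [sub_eq_add_neg, add_comm, zpow_add, zpow_neg_one, Equiv.Perm.mul_apply]
    rw [this]
    have h2 : ∀ x, v (σ⁻¹ x) = v x := by
      intro x
      conv_rhs => rw [← (by simp : σ (σ⁻¹ x) = x)]
      rw [hv]
    rw [h2]
    exact ih

/-- lift a fixed vector to the quotient -/
def liftFix (v : Fin n → A) (hv : ∀ i, v (σ i) = v i) : CycQ σ → A :=
  Quotient.lift v (fun a b hab => fixed_const σ hv hab)

lemma sum_fiber (a : CycQ σ → A) :
    ∑ i, a (Quotient.mk (scSetoid σ) i) = ∑ q, orbSize σ q • a q := by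
  classical
  rw [← Finset.sum_fiberwise Finset.univ (fun i => Quotient.mk (scSetoid σ) i) (fun i => a (Quotient.mk (scSetoid σ) i))]
  refine Finset.sum_congr rfl fun q _ => ?_
  have : ∀ i ∈ Finset.univ.filter (fun i => Quotient.mk (scSetoid σ) i = q),
      a (Quotient.mk (scSetoid σ) i) = a q := by
    intro i hi
    rw [(Finset.mem_filter.mp hi).2]
  rw [Finset.sum_congr rfl this, Finset.sum_const]
  rfl

def fixEquiv : {v : Fin n → A // (∀ i, v (σ i) = v i) ∧ ∑ i, v i = 0}
    ≃ {a : CycQ σ → A // ∑ q, orbSize σ q • a q = 0} where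
  toFun := fun ⟨v, hv, hs⟩ => ⟨liftFix σ v hv, by
    rw [← sum_fiber σ (liftFix σ v hv)]
    exact hs⟩
  invFun := fun ⟨a, ha⟩ => ⟨fun i => a (Quotient.mk (scSetoid σ) i),
    ⟨fun i => congrArg a (eq_of_sc (⟨1, by simp⟩ : σ.SameCycle i (σ i))).symm, by
      rw [sum_fiber σ a]; exact ha⟩⟩
  left_inv := fun ⟨v, hv, hs⟩ => rfl
  right_inv := fun ⟨a, ha⟩ => by
    apply Subtype.ext
    funext q
    induction q using Quotient.ind with
    | _ i => rfl

end Equiv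

/-- The number of fixed points of `σ` acting on the zero-sum subgroup `M ⊆ A^n` is
`d_A(σ) · ℓ^{m(σ) - 1}`, where `d_A(σ)` is the cardinality of the kernel of
multiplication by the gcd `d(σ)` of the cycle lengths of `σ` on `A`. -/
theorem card_fixedPoints_zeroSum {n ℓ : ℕ} (hn : 0 < n) (A : Type*) [AddCommGroup A]
    [Fintype A] (hA : Fintype.card A = ℓ) (σ : Equiv.Perm (Fin n)) :
    Nat.card {v : Fin n → A // (∀ i, v (σ i) = v i) ∧ ∑ i, v i = 0} =
      Nat.card {a : A // cycleGcd σ • a = 0} * ℓ ^ (numCycles σ - 1) := by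
  classical
  have : Nonempty (Fin n) := ⟨⟨0, hn⟩⟩
  have hQ : Nonempty (CycQ σ) := ⟨Quotient.mk (scSetoid σ) ⟨0, hn⟩⟩
  rw [Nat.card_congr (fixEquiv σ), alg_count A (orbSize σ), ← cycleGcd_eq, ← numCycles_eq, hA]
end

section
/- Let A be a finite abelian group of order ℓ with gcd(n, ℓ) = 1, and let M = {(a_1, …, a_n) ∈ A^n : ∑ a_i = 0} with S_n acting by permutation of coordinates. Then for every σ ∈ S_n, the number of fixed points of σ in M equals ℓ^{m(σ) − 1}, where m(σ) is the number of cycles of σ. -/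
open Equiv Equiv.Perm

section aux

variable {n : ℕ} (σ : Equiv.Perm (Fin n))

/-- If `v` is σ-invariant, it is constant on cycles. -/
lemma aux_zpow_inv {A : Type*} {v : Fin n → A} (hv : ∀ i, v (σ i) = v i) (k : ℤ) (x : Fin n) :
    v ((σ ^ k) x) = v x := by
  have hinv : ∀ y, v (σ⁻¹ y) = v y := by
    intro y
    have := hv (σ⁻¹ y)
    simpa using this.symm
  induction k using Int.induction_on with
  | zero => simp
  | succ k ih =>
      have : (σ ^ ((k : ℤ) + 1)) x = σ ((σ ^ (k : ℤ)) x) := by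
        rw [add_comm, zpow_add, zpow_one, Equiv.Perm.mul_apply]
      rw [this, hv, ih]
  | pred k ih =>
      have : (σ ^ (-(k : ℤ) - 1)) x = σ⁻¹ ((σ ^ (-(k : ℤ))) x) := by
        rw [sub_eq_add_neg, add_comm, zpow_add, zpow_neg_one, Equiv.Perm.mul_apply]
      rw [this, hinv, ih]

/-- The quotient of `Fin n` by the same-cycle relation. -/
abbrev CycQuot : Type := Quotient (Equiv.Perm.SameCycle.setoid σ)

/-- σ-invariant functions correspond to functions on the set of cycles. -/
noncomputable def fixedEquiv (A : Type*) :
    {v : Fin n → A // ∀ i, v (σ i) = v i} ≃ (CycQuot σ → A) where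
  toFun v := Quotient.lift v.1 (by
    rintro x y ⟨k, hk⟩
    rw [← hk, aux_zpow_inv σ v.2])
  invFun g := ⟨fun i => g ⟦i⟧, by
    intro i
    exact congrArg g (Quotient.sound (⟨-1, by simp⟩ : σ.SameCycle (σ i) i))⟩
  left_inv v := Subtype.ext rfl
  right_inv g := funext fun q => Quotient.inductionOn q fun x => rfl

/-- A point of `Fin n` is sent to its cycle factor, or to itself if it is fixed. -/
def toSum (x : Fin n) : σ.cycleFactorsFinset ⊕ {x : Fin n // σ x = x} :=
  if h : σ x = x then Sum.inr ⟨x, h⟩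
  else Sum.inl ⟨σ.cycleOf x, cycleOf_mem_cycleFactorsFinset_iff.2 (mem_support.2 h)⟩

lemma toSum_respects {x y : Fin n} (hxy : σ.SameCycle x y) : toSum σ x = toSum σ y := by
  by_cases hx : σ x = x
  · have : y = x := by
      obtain ⟨k, hk⟩ := hxy
      rw [← hk, zpow_apply_eq_self_of_apply_eq_self hx]
    subst this
    rfl
  · have hy : ¬ σ y = y := by
      intro hy
      obtain ⟨k, hk⟩ := hxy.symm
      rw [zpow_apply_eq_self_of_apply_eq_self hy] at hk
      exact hx (hk ▸ hy)
    unfold toSum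
    rw [dif_neg hx, dif_neg hy]
    congr 1
    exact Subtype.ext hxy.cycleOf_eq

/-- The set of cycles corresponds to cycle factors plus fixed points. -/
noncomputable def cycQuotEquiv :
    CycQuot σ ≃ (σ.cycleFactorsFinset ⊕ {x : Fin n // σ x = x}) := by
  refine Equiv.ofBijective (Quotient.lift (toSum σ) (fun x y h => toSum_respects σ h)) ⟨?_, ?_⟩
  · rintro ⟨x⟩ ⟨y⟩ h
    have h' : toSum σ x = toSum σ y := h
    unfold toSum at h'
    by_cases hx : σ x = x <;> by_cases hy : σ y = y
    · rw [dif_pos hx, dif_pos hy] at h'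
      obtain rfl : x = y := congrArg Subtype.val (Sum.inr.inj h')
      exact Quotient.sound (Equiv.Perm.SameCycle.refl σ x)
    · rw [dif_pos hx, dif_neg hy] at h'
      cases h'
    · rw [dif_neg hx, dif_pos hy] at h'
      cases h'
    · rw [dif_neg hx, dif_neg hy] at h'
      apply Quotient.sound
      have hcyc : σ.cycleOf x = σ.cycleOf y := congrArg Subtype.val (Sum.inl.inj h')
      have hy' : y ∈ (σ.cycleOf y).support :=
        mem_support_cycleOf_iff.2 ⟨Equiv.Perm.SameCycle.refl σ y, mem_support.2 hy⟩
      rw [← hcyc] at hy'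
      exact (mem_support_cycleOf_iff.1 hy').1
  · rintro (⟨c, hc⟩ | ⟨x, hx⟩)
    · obtain ⟨x, hcx, -⟩ := (mem_cycleFactorsFinset_iff.1 hc).1
      have hxsupp : x ∈ c.support := mem_support.2 hcx
      have hceq : c = σ.cycleOf x := cycle_is_cycleOf hxsupp hc
      have hxσ : ¬ σ x = x := by
        intro h
        have := (mem_cycleFactorsFinset_iff.1 hc).2 x hxsupp
        exact hcx (this.trans h)
      refine ⟨⟦x⟧, ?_⟩
      show toSum σ x = _
      unfold toSum
      rw [dif_neg hxσ]
      congr 1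
      exact Subtype.ext hceq.symm
    · refine ⟨⟦x⟧, ?_⟩
      show toSum σ x = _
      unfold toSum
      rw [dif_pos hx]

lemma card_cycQuot : Nat.card (CycQuot σ) = numCycles σ := by
  rw [Nat.card_congr (cycQuotEquiv σ), Nat.card_sum]
  have h1 : Nat.card σ.cycleFactorsFinset = Multiset.card σ.cycleType := by
    rw [Nat.card_eq_fintype_card, Fintype.card_coe, cycleType_def, Multiset.card_map]
    rfl
  have h2 : Nat.card {x : Fin n // σ x = x} = n - σ.support.card := by
    rw [Nat.card_eq_fintype_card, Fintype.card_subtype]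
    have h3 := Finset.card_filter_add_card_filter_not (s := (Finset.univ : Finset (Fin n)))
      (fun x => σ x = x)
    have hsupp := congrArg Finset.card
      (show σ.support = Finset.univ.filter (fun x => ¬ σ x = x) by
        ext x; simp [Equiv.Perm.mem_support])
    have hn : (Finset.univ : Finset (Fin n)).card = n := by simp
    omega
  rw [h1, h2]
  simp [numCycles, cycleLengths]

end aux

/-- If `gcd(n, ℓ) = 1`, the number of fixed points of `σ` acting on the zero-sum subgroup
`M ⊆ A^n` is `ℓ^{m(σ) - 1}`. -/
theorem card_fixedPoints_zeroSum_coprime {n ℓ : ℕ} (hcop : Nat.Coprime n ℓ) (A : Type*)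
    [AddCommGroup A] [Fintype A] (hA : Fintype.card A = ℓ) (σ : Equiv.Perm (Fin n)) :
    Nat.card {v : Fin n → A // (∀ i, v (σ i) = v i) ∧ ∑ i, v i = 0} =
      ℓ ^ (numCycles σ - 1) := by
  classical
  set m := numCycles σ with hm
  have hcardA : Nat.card A = ℓ := by rw [Nat.card_eq_fintype_card, hA]
  have hbij : Function.Bijective (fun a : A => n • a) :=
    Nat.Coprime.nsmul_right_bijective (by rw [hcardA]; exact hcop.symm)
  set cv : A → (Fin n → A) := fun a _ => Function.surjInv hbij.surjective a with hcv
  have hcsum : ∀ a : A, ∑ i, cv a i = a := by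
    intro a
    simp only [hcv, Finset.sum_const, Finset.card_univ, Fintype.card_fin]
    exact Function.surjInv_eq hbij.surjective a
  have hcfix : ∀ a : A, ∀ i, cv a (σ i) = cv a i := fun a i => rfl
  let K := {v : Fin n → A // (∀ i, v (σ i) = v i) ∧ ∑ i, v i = 0}
  let F := {v : Fin n → A // ∀ i, v (σ i) = v i}
  have esplit : F ≃ K × A :=
    { toFun := fun v => (⟨v.1 - cv (∑ i, v.1 i),
        fun i => by simp only [Pi.sub_apply, v.2, hcfix],
        by
          simp only [Pi.sub_apply]
          rw [Finset.sum_sub_distrib, hcsum, sub_self]⟩,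
        ∑ i, v.1 i)
      invFun := fun p => ⟨p.1.1 + cv p.2,
        fun i => by simp only [Pi.add_apply, p.1.2.1, hcfix]⟩
      left_inv := fun v => by
        apply Subtype.ext
        simp
      right_inv := fun p => by
        have hs : ∑ i, (p.1.1 i + cv p.2 i) = p.2 := by
          rw [Finset.sum_add_distrib, hcsum, p.1.2.2, zero_add]
        refine Prod.ext (Subtype.ext (funext fun i => ?_)) ?_
        · simp only [Pi.sub_apply, Pi.add_apply]
          rw [hs, add_sub_cancel_right]
        · simp only [Pi.add_apply]
          exact hs }
  have hF : Nat.card F = ℓ ^ m := by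
    rw [Nat.card_congr (fixedEquiv σ A), Nat.card_fun, hcardA, card_cycQuot]
  have hKA : Nat.card F = Nat.card K * ℓ := by
    rw [Nat.card_congr esplit, Nat.card_prod, hcardA]
  rw [hF] at hKA
  have hℓpos : 0 < ℓ := by rw [← hA]; exact Fintype.card_pos
  rcases Nat.eq_zero_or_pos m with hm0 | hmpos
  · rw [hm0, pow_zero] at hKA
    have hK1 : Nat.card K ∣ 1 := ⟨ℓ, hKA⟩
    rw [hm0, Nat.zero_sub, pow_zero]
    exact Nat.dvd_one.mp hK1
  · obtain ⟨k, hk⟩ : ∃ k, m = k + 1 := ⟨m - 1, (Nat.succ_pred_eq_of_pos hmpos).symm⟩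
    rw [hk, pow_succ] at hKA
    rw [hk]
    simpa using Nat.eq_of_mul_eq_mul_right hℓpos hKA.symm
end

section
/- Let n, ℓ be positive integers with gcd(n, ℓ) > 1. Then the class function on S_n given by σ ↦ ℓ^{m(σ) − 1}, where m(σ) is the number of cycles of σ, is not the character of any finite-dimensional complex representation of S_n. -/
open Equiv Equiv.Perm Finset CategoryTheory MonoidalCategory


lemma numCycles_eq_s7 {n : ℕ} (σ : Equiv.Perm (Fin n)) :
    numCycles σ = Multiset.card σ.cycleType + (n - σ.support.card) := by
  simp [numCycles, cycleLengths]

lemma one_le_numCycles {n : ℕ} (hn : 0 < n) (σ : Equiv.Perm (Fin n)) :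
    1 ≤ numCycles σ := by
  rw [numCycles_eq_s7]
  by_contra h
  push_neg at h
  rw [Nat.lt_one_iff, Nat.add_eq_zero] at h
  obtain ⟨h1, h2⟩ := h
  rw [Multiset.card_eq_zero, cycleType_eq_zero] at h1
  subst h1
  simp at h2
  omega

lemma numCycles_eq_one_iff {n : ℕ} (hn : 2 ≤ n) (σ : Equiv.Perm (Fin n)) :
    numCycles σ = 1 ↔ σ.cycleType = {n} := by
  have hsle : σ.support.card ≤ n := by
    simpa using Finset.card_le_univ σ.support
  constructor
  · intro h
    rw [numCycles_eq_s7] at h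
    rcases Nat.eq_zero_or_pos (Multiset.card σ.cycleType) with h0 | hpos
    · rw [Multiset.card_eq_zero, cycleType_eq_zero] at h0
      subst h0
      simp at h
      omega
    · have hc1 : Multiset.card σ.cycleType = 1 := by omega
      have hs : n - σ.support.card = 0 := by omega
      obtain ⟨k, hk⟩ := Multiset.card_eq_one.mp hc1
      have hsum := sum_cycleType σ
      rw [hk] at hsum ⊢
      simp at hsum
      have : σ.support.card = n := by omega
      rw [this] at hsum
      rw [hsum]
  · intro h
    have hsum := sum_cycleType σ
    rw [h] at hsum
    simp at hsum
    rw [numCycles_eq_s7, h]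
    simp [← hsum]

lemma mem_zpowers_of_commute {n : ℕ} {c g : Equiv.Perm (Fin n)} (hc : c.IsCycle)
    (hsupp : c.support = Finset.univ) (h : Commute g c) : g ∈ Subgroup.zpowers c := by
  obtain ⟨hc', hz⟩ := hc.commute_iff.mp h
  have heq : Equiv.Perm.ofSubtype (g.subtypePerm hc') = g := by
    apply Equiv.ext
    intro a
    exact Equiv.Perm.ofSubtype_subtypePerm_of_mem hc' (by rw [hsupp]; exact Finset.mem_univ a)
  rwa [heq] at hz

lemma card_numCycles_one {n : ℕ} (hn : 2 ≤ n) :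
    Fintype.card {σ : Equiv.Perm (Fin n) // numCycles σ = 1} * n = n.factorial := by
  classical
  set G := Equiv.Perm (Fin n)
  set c : G := finRotate n with hcdef
  have hc : c.IsCycle := isCycle_finRotate_of_le hn
  have hsupp : c.support = Finset.univ := support_finRotate_of_le hn
  have hct : c.cycleType = {n} := cycleType_finRotate_of_le hn
  have horb := MulAction.card_orbit_mul_card_stabilizer_eq_card_group (ConjAct G) c
  have e1 : Fintype.card (MulAction.orbit (ConjAct G) c) =
      Fintype.card {σ : G // numCycles σ = 1} := by
    apply Fintype.card_congr
    apply Equiv.subtypeEquivRight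
    intro σ
    rw [ConjAct.mem_orbit_conjAct, isConj_iff_cycleType_eq, hct, numCycles_eq_one_iff hn]
  have e2 : Fintype.card (MulAction.stabilizer (ConjAct G) c) = n := by
    have : Fintype.card (MulAction.stabilizer (ConjAct G) c) =
        Fintype.card (Subgroup.zpowers c) := by
      apply Fintype.card_congr
      refine ⟨fun x => ⟨ConjAct.ofConjAct x.1, ?_⟩, fun g => ⟨ConjAct.toConjAct g.1, ?_⟩, ?_, ?_⟩
      · apply mem_zpowers_of_commute hc hsupp
        have hx := x.2
        rw [MulAction.mem_stabilizer_iff, ConjAct.smul_def] at hx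
        exact mul_inv_eq_iff_eq_mul.mp hx
      · rw [MulAction.mem_stabilizer_iff, ConjAct.smul_def, ConjAct.ofConjAct_toConjAct]
        obtain ⟨k, hk⟩ := g.2
        rw [← hk]
        have hcomm : Commute (c ^ k) c := (Commute.refl c).zpow_left k
        rw [hcomm.eq, mul_inv_cancel_right]
      · intro x; exact Subtype.ext (ConjAct.toConjAct_ofConjAct x.1)
      · intro g; exact Subtype.ext (ConjAct.ofConjAct_toConjAct g.1)
    rw [this, Fintype.card_zpowers, hc.orderOf, hsupp]
    simp
  rw [e1, e2] at horb
  rw [horb]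
  simp [G, Fintype.card_perm]

/-- If `gcd(n, ℓ) > 1`, the class function `σ ↦ ℓ^{m(σ) - 1}` on `S_n` is not the
character of any finite-dimensional complex representation. -/
theorem not_char_of_not_coprime {n ℓ : ℕ} (hn : 0 < n) (hℓ : 0 < ℓ)
    (hcop : 1 < Nat.gcd n ℓ) :
    ¬ ∃ V : FDRep ℂ (Equiv.Perm (Fin n)),
      ∀ σ : Equiv.Perm (Fin n), V.character σ = (ℓ : ℂ) ^ (numCycles σ - 1) := by
  classical
  rintro ⟨V, hV⟩
  -- basic facts
  obtain ⟨p, pp, hpg⟩ := Nat.exists_prime_and_dvd (by omega : Nat.gcd n ℓ ≠ 1)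
  have hpn : p ∣ n := hpg.trans (Nat.gcd_dvd_left n ℓ)
  have hpl : p ∣ ℓ := hpg.trans (Nat.gcd_dvd_right n ℓ)
  have hn2 : 2 ≤ n := by
    have := Nat.le_of_dvd hn (Nat.gcd_dvd_left n ℓ)
    omega
  set G := Equiv.Perm (Fin n)
  have hcardG : Fintype.card G = n.factorial := by
    simp [G, Fintype.card_perm]
  have hcne : (Fintype.card G : ℂ) ≠ 0 := by
    rw [hcardG]
    exact_mod_cast Nat.factorial_ne_zero n
  letI : Invertible (Fintype.card G : ℂ) := invertibleOfNonzero hcne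
  set t : ℕ := (Nat.factorial (n-1)).factorization p with ht
  -- tensor powers: a rep with character χ^(t+1)
  have hpow : ∀ j : ℕ, ∃ W : FDRep ℂ G, ∀ σ : G,
      W.character σ = (ℓ : ℂ) ^ ((numCycles σ - 1) * (j + 1)) := by
    intro j
    induction j with
    | zero => exact ⟨V, fun σ => by rw [hV σ]; ring⟩
    | succ j ih =>
      obtain ⟨W, hW⟩ := ih
      refine ⟨W ⊗ V, fun σ => ?_⟩
      rw [FDRep.char_tensor, Pi.mul_apply, hW, hV σ, ← pow_add]
      ring_nf
  obtain ⟨W, hW⟩ := hpow t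
  -- the averaged character is a natural number
  have havg := FDRep.average_char_eq_finrank_invariants W
  set d : ℕ := Module.finrank ℂ (Representation.invariants W.ρ) with hd
  have hsumW : ∑ σ : G, W.character σ = (Fintype.card G : ℂ) * d := by
    rw [← havg, Nat.card_eq_fintype_card, ← mul_assoc, mul_inv_cancel₀ hcne, one_mul]
  -- transfer to ℕ
  set S : ℕ := ∑ σ : G, ℓ ^ ((numCycles σ - 1) * (t + 1)) with hSdef
  have hScast : (S : ℂ) = ∑ σ : G, W.character σ := by
    rw [hSdef]
    push_cast
    exact Finset.sum_congr rfl fun σ _ => (hW σ).symm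
  have hS : S = n.factorial * d := by
    have : (S : ℂ) = ((n.factorial * d : ℕ) : ℂ) := by
      rw [hScast, hsumW, hcardG]; push_cast; ring
    exact_mod_cast this
  -- split the sum
  have hsplit : S = (Finset.univ.filter (fun σ : G => numCycles σ = 1)).card +
      ∑ σ ∈ Finset.univ.filter (fun σ : G => ¬ numCycles σ = 1),
        ℓ ^ ((numCycles σ - 1) * (t + 1)) := by
    rw [hSdef, ← Finset.sum_filter_add_sum_filter_not Finset.univ
      (fun σ : G => numCycles σ = 1)]
    congr 1
    rw [Finset.sum_congr rfl (fun σ hσ => ?_), Finset.sum_const, smul_eq_mul, mul_one]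
    rw [Finset.mem_filter] at hσ
    rw [hσ.2]
    simp
  -- the filter card is (n-1)!
  have hA : (Finset.univ.filter (fun σ : G => numCycles σ = 1)).card = (n-1).factorial := by
    have h1 := card_numCycles_one hn2
    rw [Fintype.card_subtype] at h1
    have h2 : n.factorial = (n-1).factorial * n := by
      cases n with
      | zero => omega
      | succ m => simp [Nat.factorial_succ]; ring
    rw [h2] at h1
    exact Nat.eq_of_mul_eq_mul_right (by omega) h1
  -- divisibility
  have hd1 : p ^ (t + 1) ∣ n.factorial * d := by
    apply Dvd.dvd.mul_right
    have : n.factorial = n * (n-1).factorial := by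
      cases n with
      | zero => omega
      | succ m => simp [Nat.factorial_succ]
    rw [this, pow_succ, mul_comm (p ^ t) p]
    exact mul_dvd_mul hpn (Nat.ordProj_dvd _ p)
  have hd2 : p ^ (t + 1) ∣ ∑ σ ∈ Finset.univ.filter (fun σ : G => ¬ numCycles σ = 1),
      ℓ ^ ((numCycles σ - 1) * (t + 1)) := by
    apply Finset.dvd_sum
    intro σ hσ
    rw [Finset.mem_filter] at hσ
    have hm : 1 ≤ numCycles σ - 1 := by
      have := one_le_numCycles hn σ
      omega
    calc p ^ (t + 1) ∣ ℓ ^ (t + 1) := pow_dvd_pow_of_dvd hpl _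
      _ ∣ ℓ ^ ((numCycles σ - 1) * (t + 1)) := pow_dvd_pow ℓ (by nlinarith)
  have hd3 : p ^ (t + 1) ∣ (n-1).factorial := by
    have : (n-1).factorial = S - ∑ σ ∈ Finset.univ.filter (fun σ : G => ¬ numCycles σ = 1),
        ℓ ^ ((numCycles σ - 1) * (t + 1)) := by omega
    rw [this]
    exact Nat.dvd_sub (hS ▸ hd1) hd2
  rw [pp.pow_dvd_iff_le_factorization (Nat.factorial_ne_zero _)] at hd3
  omega
end

section
/- Let n and ℓ be positive integers with gcd(n, ℓ) > 1. Then there exists a positive integer α such that ℓ^α does not divide the binomial coefficient C(n + ℓ^α − 1, n). -/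
lemma ascFactorial_eq_prod_range' (m : ℕ) : ∀ n : ℕ,
    m.ascFactorial n = ∏ i ∈ Finset.range n, (m + i)
  | 0 => by simp
  | n + 1 => by
    rw [Nat.ascFactorial_succ, Finset.prod_range_succ, ascFactorial_eq_prod_range' m n,
      mul_comm]

/-- If `gcd(n, ℓ) > 1`, there exists `α ≥ 1` such that `ℓ^α` does not divide
`C(n + ℓ^α - 1, n)`. -/
theorem exists_pow_not_dvd_choose {n ℓ : ℕ} (hn : 0 < n) (hℓ : 0 < ℓ)
    (h : 1 < Nat.gcd n ℓ) :
    ∃ α : ℕ, 0 < α ∧ ¬ (ℓ ^ α ∣ (n + ℓ ^ α - 1).choose n) := by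
  set p := (Nat.gcd n ℓ).minFac with hpdef
  have hp : p.Prime := Nat.minFac_prime (by omega)
  have hpn : p ∣ n := (Nat.minFac_dvd _).trans (Nat.gcd_dvd_left _ _)
  have hpl : p ∣ ℓ := (Nat.minFac_dvd _).trans (Nat.gcd_dvd_right _ _)
  refine ⟨n, hn, ?_⟩
  intro hdvd
  set m := ℓ ^ n with hm
  have hm0 : m ≠ 0 := pow_ne_zero _ hℓ.ne'
  have hm1 : 1 ≤ m := Nat.one_le_iff_ne_zero.mpr hm0
  have hpm : p ^ n ∣ m := pow_dvd_pow_of_dvd hpl n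
  obtain ⟨k, rfl⟩ : ∃ k, n = k + 1 := ⟨n - 1, by omega⟩
  set C := (k + 1 + m - 1).choose (k + 1) with hC
  have hC0 : C ≠ 0 := Nat.choose_pos (by omega) |>.ne'
  -- key identity : (k+1)! * C = m.ascFactorial (k+1)
  have hkey : Nat.factorial (k + 1) * C = m.ascFactorial (k + 1) := by
    rw [Nat.ascFactorial_eq_factorial_mul_choose', hC, Nat.add_comm m (k + 1)]
  -- per-term valuation
  have hterm : ∀ i ∈ Finset.range k,
      (m + (i + 1)).factorization p = (i + 1).factorization p := by
    intro i hi
    simp only [Finset.mem_range] at hi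
    set v := (i + 1).factorization p with hv
    have hvd : p ^ v ∣ i + 1 := Nat.ordProj_dvd _ _
    have hvnd : ¬ p ^ (v + 1) ∣ i + 1 :=
      Nat.pow_succ_factorization_not_dvd (by omega) hp
    have hvlt : v + 1 ≤ k + 1 := by
      by_contra hcon
      have h1 : p ^ (k + 1) ∣ i + 1 := dvd_trans (pow_dvd_pow p (by omega)) hvd
      have h2 : p ^ (k + 1) ≤ i + 1 := Nat.le_of_dvd (by omega) h1
      have h3 : k + 1 < 2 ^ (k + 1) := Nat.lt_two_pow_self
      have h4 : 2 ^ (k + 1) ≤ p ^ (k + 1) :=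
        Nat.pow_le_pow_left hp.two_le _
      omega
    have hd1 : p ^ v ∣ m + (i + 1) :=
      Nat.dvd_add ((pow_dvd_pow p (by omega)).trans hpm) hvd
    have hd2 : ¬ p ^ (v + 1) ∣ m + (i + 1) := by
      intro hcon
      have := Nat.dvd_sub hcon ((pow_dvd_pow p hvlt).trans hpm)
      rw [show m + (i + 1) - m = i + 1 by omega] at this
      exact hvnd this
    refine le_antisymm ?_ ?_
    · exact Nat.le_of_lt_succ (lt_of_not_ge fun hle =>
        hd2 ((pow_dvd_pow p (by omega)).trans (Nat.ordProj_dvd _ _)))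
    · exact (hp.pow_dvd_iff_le_factorization (by omega)).mp hd1
  -- valuations of both sides
  have hprod : m.ascFactorial (k + 1) = (∏ i ∈ Finset.range k, (m + (i + 1))) * (m + 0) := by
    rw [ascFactorial_eq_prod_range', Finset.prod_range_succ']
  have hfact_eq : (Nat.factorial (k + 1) * C).factorization p
      = ((∏ i ∈ Finset.range k, (m + (i + 1))) * m).factorization p := by
    rw [hkey, hprod]; norm_num
  rw [Nat.factorization_mul (Nat.factorial_ne_zero _) hC0,
    Nat.factorization_mul (Finset.prod_ne_zero_iff.mpr fun i _ => by omega) hm0] at hfact_eq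
  have hprodval : (∏ i ∈ Finset.range k, (m + (i + 1))).factorization p
      = (Nat.factorial k).factorization p := by
    rw [Nat.factorization_prod (fun i _ => by omega),
      ← Finset.prod_range_add_one_eq_factorial,
      Nat.factorization_prod (fun i _ => by omega)]
    simp only [Finsupp.coe_finset_sum, Finset.sum_apply]
    exact Finset.sum_congr rfl hterm
  have hfactorial : (Nat.factorial (k + 1)).factorization p = (k + 1).factorization p + (Nat.factorial k).factorization p := by
    rw [Nat.factorial_succ, Nat.factorization_mul (by omega) (Nat.factorial_ne_zero _)]
    simp
  simp only [Finsupp.add_apply, Finsupp.coe_add, Pi.add_apply] at hfact_eq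
  rw [hfactorial, hprodval] at hfact_eq
  -- so C.factorization p + (k+1).factorization p = m.factorization p
  have hmain : (k + 1).factorization p + C.factorization p = m.factorization p := by omega
  have hn1 : 1 ≤ (k + 1).factorization p :=
    (hp.pow_dvd_iff_le_factorization (by omega)).mp (by simpa using hpn)
  -- from divisibility
  have hdvd2 : p ^ m.factorization p ∣ C := (Nat.ordProj_dvd m p).trans hdvd
  have : m.factorization p ≤ C.factorization p :=
    (hp.pow_dvd_iff_le_factorization hC0).mp hdvd2
  omega
end
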